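/- arXiv:2501.07944 — 4 statements merged into one kernel-verified Lean document; each statement's English description precedes it below -/
import Mathlib

section
/- Let p be a prime, q = p^r with r ≥ 1, K an algebraically closed field, and M an invertible n×n matrix over K. Assume M is similar to M^q, i.e. there exists an invertible n×n matrix P over K with P * M * P⁻¹ = M^q. Then there exists a natural number k ≥ 1 such that every root λ of the characteristic polynomial of M satisfies λ^(q^k − 1) = 1; in particular, every eigenvalue of M is a root of unity of order coprime to p. -/
open Polynomial Matrix

lemma isRoot_charpoly_iff_mem_spectrum {n : ℕ} {K : Type*} [Field K]
    (M : Matrix (Fin n) (Fin n) K) (μ : K) :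
    M.charpoly.IsRoot μ ↔ μ ∈ spectrum K M := by
  have halg : (algebraMap K (Matrix (Fin n) (Fin n) K)) μ = Matrix.scalar (Fin n) μ := rfl
  rw [spectrum.mem_iff, halg, Matrix.isUnit_iff_isUnit_det, isUnit_iff_ne_zero, not_not,
    IsRoot, Matrix.charpoly, _root_.eval_det, matPolyEquiv_charmatrix,
    eval_sub, eval_X, eval_C]

/-- Let `p` be a prime, `q = p ^ r` with `r ≥ 1`, `K` an algebraically
closed field, and `M` an invertible `n×n` matrix over `K`. Assume `M` is similar to
`M ^ q`, i.e. there exists an invertible `n×n` matrix `P` over `K` with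
`P * M * P⁻¹ = M ^ q`. Then there exists a natural number `k ≥ 1` such that every root
`λ` of the characteristic polynomial of `M` satisfies `λ ^ (q ^ k - 1) = 1`; in
particular, every eigenvalue of `M` is a root of unity of order coprime to `p`. -/
theorem eigenvalues_of_selfsimilar_pow_are_roots_of_unity
    (p r q : ℕ) (hp : p.Prime) (hr : 1 ≤ r) (hq : q = p ^ r)
    {K : Type*} [Field K] [IsAlgClosed K] {n : ℕ}
    (M : Matrix (Fin n) (Fin n) K) (hM : IsUnit M)
    (hsim : ∃ P : (Matrix (Fin n) (Fin n) K)ˣ,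
      (P : Matrix (Fin n) (Fin n) K) * M * ((P⁻¹ : (Matrix (Fin n) (Fin n) K)ˣ) :
        Matrix (Fin n) (Fin n) K) = M ^ q) :
    ∃ k : ℕ, 1 ≤ k ∧ ∀ lam ∈ M.charpoly.roots, lam ^ (q ^ k - 1) = 1 := by
  obtain ⟨P, hP⟩ := hsim
  have hq0 : 0 < q := hq ▸ pow_pos hp.pos r
  -- The spectrum of `M ^ q` equals the spectrum of `M`.
  have hconj : spectrum K (M ^ q) = spectrum K M := by
    rw [← hP, spectrum.units_conjugate]
  -- Spectral mapping: spectrum of `M ^ q` is the image of the spectrum under `· ^ q`.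
  have hmap : (· ^ q) '' spectrum K M = spectrum K M := by
    rw [← spectrum.map_pow_of_pos M hq0, hconj]
  -- The spectrum is a finite set.
  have hfin : (spectrum K M).Finite := by
    have h0 : M.charpoly ≠ 0 := M.charpoly_monic.ne_zero
    refine Set.Finite.subset (Polynomial.finite_setOf_isRoot h0) ?_
    intro x hx
    exact (isRoot_charpoly_iff_mem_spectrum M x).mpr hx
  haveI : Finite (spectrum K M) := hfin
  -- The map `x ↦ x ^ q` restricts to a bijection of the spectrum.
  have hmaps : ∀ x : spectrum K M, (x : K) ^ q ∈ spectrum K M := by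
    intro x
    have hx : (x : K) ^ q ∈ (· ^ q) '' spectrum K M := ⟨x, x.2, rfl⟩
    rwa [hmap] at hx
  set g : spectrum K M → spectrum K M := fun x => ⟨(x : K) ^ q, hmaps x⟩ with hg
  have hsurj : Function.Surjective g := by
    intro y
    have hy : (y : K) ∈ (· ^ q) '' spectrum K M := (Set.ext_iff.mp hmap (y : K)).mpr y.2
    obtain ⟨x, hx, hxy⟩ := hy
    exact ⟨⟨x, hx⟩, Subtype.ext hxy⟩
  have hbij : Function.Bijective g :=
    ⟨(Finite.injective_iff_surjective).mpr hsurj, hsurj⟩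
  set σ : Equiv.Perm (spectrum K M) := Equiv.ofBijective g hbij with hσ
  have hk0 : 0 < orderOf σ := orderOf_pos σ
  refine ⟨orderOf σ, hk0, ?_⟩
  intro lam hlam
  have hlam' : lam ∈ spectrum K M := by
    rw [← isRoot_charpoly_iff_mem_spectrum]
    exact isRoot_of_mem_roots hlam
  -- iterating σ computes powers
  have hiter : ∀ (m : ℕ) (x : spectrum K M), ((σ ^ m) x : K) = (x : K) ^ q ^ m := by
    intro m
    induction m with
    | zero => intro x; simp
    | succ m ih =>
      intro x
      rw [pow_succ', Equiv.Perm.mul_apply]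
      calc ((σ ((σ ^ m) x)) : K) = (((σ ^ m) x : K)) ^ q := rfl
        _ = ((x : K) ^ q ^ m) ^ q := by rw [ih x]
        _ = (x : K) ^ q ^ (m + 1) := by rw [← pow_mul, ← pow_succ]
  have hfix : lam ^ q ^ orderOf σ = lam := by
    have := hiter (orderOf σ) ⟨lam, hlam'⟩
    rw [pow_orderOf_eq_one σ] at this
    simpa using this.symm
  have hlamne : lam ≠ 0 := by
    intro h
    rw [h] at hlam'
    exact (spectrum.zero_mem_iff K).mp hlam' hM
  have h1 : (1 : ℕ) ≤ q ^ orderOf σ := Nat.one_le_pow _ _ hq0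
  have : lam ^ (q ^ orderOf σ - 1) * lam = 1 * lam := by
    rw [one_mul, ← pow_succ, Nat.sub_add_cancel h1, hfix]
  exact mul_right_cancel₀ hlamne this
end

section
/- Let K be an algebraically closed field, q ≥ 2 a natural number, and M an invertible n×n matrix over K that is diagonalizable (similar to a diagonal matrix) and similar to M^q. Then there exists a natural number k ≥ 1 such that M^(q^k − 1) = 1; in particular M has finite order, and if q is a power of a prime p this order is coprime to p. -/
/-!
The multiset of eigenvalues `d i` of `M` is mapped to itself by `x ↦ x ^ q`, since `M ^ q` is
similar to `M` and so has the same characteristic polynomial. A map of a finite set onto itself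
is a permutation, so some iterate `x ↦ x ^ q ^ k` fixes every eigenvalue. Hence `M ^ q ^ k = M`,
and invertibility of `M` gives `M ^ (q ^ k - 1) = 1`; an order dividing `q ^ k - 1` is prime
to `q`.
-/

open Polynomial Matrix Set

theorem Set.Finite.exists_iterate_eq_self_of_surjOn {α : Type*} {f : α → α} {s : Set α}
    (hs : s.Finite) (hmaps : MapsTo f s s) (hsurj : SurjOn f s s) :
    ∃ k, 0 < k ∧ ∀ x ∈ s, f^[k] x = x := by
  have : Finite s := hs
  let e : Equiv.Perm s := .ofBijective hmaps.restrict <|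
    Finite.surjective_iff_bijective.mp (hmaps.restrict_surjective_iff.mpr hsurj)
  refine ⟨orderOf e, orderOf_pos e, fun x hx => ?_⟩
  have := congr($(pow_orderOf_eq_one e) ⟨x, hx⟩)
  rw [Equiv.Perm.coe_pow, Equiv.Perm.coe_one, id_eq, Subtype.ext_iff] at this
  exact (hmaps.coe_iterate_restrict ⟨x, hx⟩ _).symm.trans this

theorem Multiset.exists_iterate_eq_self_of_map_eq {α : Type*} {f : α → α} {m : Multiset α}
    (h : m.map f = m) : ∃ k, 0 < k ∧ ∀ x ∈ m, f^[k] x = x := by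
  have hmaps : MapsTo f {x | x ∈ m} {x | x ∈ m} := fun x hx =>
    h ▸ Multiset.mem_map_of_mem f hx
  have hsurj : SurjOn f {x | x ∈ m} {x | x ∈ m} := fun y hy => by
    rw [mem_ofPred_eq, ← h, Multiset.mem_map] at hy
    exact hy
  exact m.finite_toSet.exists_iterate_eq_self_of_surjOn hmaps hsurj

theorem Matrix.roots_charpoly_diagonal {R ι : Type*} [CommRing R] [IsDomain R] [Fintype ι]
    [DecidableEq ι] (d : ι → R) :
    (diagonal d).charpoly.roots = Finset.univ.val.map d := by
  rw [charpoly_diagonal,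
    roots_prod _ _ (Finset.prod_ne_zero_iff.mpr fun i _ => X_sub_C_ne_zero _)]
  simp

theorem IsUnit.pow_sub_one_eq_one_of_pow_eq_self {M : Type*} [Monoid M] {x : M} (hx : IsUnit x)
    {N : ℕ} (h : x ^ N = x) : x ^ (N - 1) = 1 := by
  rcases N with _ | N
  · simp
  · exact hx.mul_eq_right.mp (by rwa [← pow_succ])

theorem Nat.coprime_pow_sub_one_self {q k : ℕ} (hq : 0 < q) (hk : k ≠ 0) :
    (q ^ k - 1).Coprime q :=
  ((coprime_self_sub_left (one_le_pow k q hq)).mpr (coprime_one_left _)).coprime_dvd_right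
    (dvd_pow_self q hk)

theorem diagonalizable_selfsimilar_pow_has_finite_order_general
    {K : Type*} [Field K] {n : ℕ} (q : ℕ) (hq : 2 ≤ q)
    (M : Matrix (Fin n) (Fin n) K) (hM : IsUnit M)
    (hdiag : ∃ (Q : (Matrix (Fin n) (Fin n) K)ˣ) (d : Fin n → K),
      (Q : Matrix (Fin n) (Fin n) K) * M * ((Q⁻¹ : (Matrix (Fin n) (Fin n) K)ˣ) :
        Matrix (Fin n) (Fin n) K) = Matrix.diagonal d)
    (hsim : ∃ P : (Matrix (Fin n) (Fin n) K)ˣ,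
      (P : Matrix (Fin n) (Fin n) K) * M * ((P⁻¹ : (Matrix (Fin n) (Fin n) K)ˣ) :
        Matrix (Fin n) (Fin n) K) = M ^ q) :
    (∃ k : ℕ, 1 ≤ k ∧ M ^ (q ^ k - 1) = 1) ∧ IsOfFinOrder M ∧
      (∀ p r : ℕ, p.Prime → 1 ≤ r → q = p ^ r → Nat.Coprime (orderOf M) p) := by
  obtain ⟨Q, d, hQ⟩ := hdiag
  obtain ⟨P, hP⟩ := hsim
  have hcharpoly : (diagonal (d ^ q)).charpoly = (diagonal d).charpoly := by
    rw [← diagonal_pow, ← hQ, Units.conj_pow, ← hP]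
    simp only [coe_units_inv, charpoly_units_conj]
  have heigen : (Finset.univ.val.map d).map (· ^ q) = Finset.univ.val.map d := by
    rw [Multiset.map_map]
    have := congr(roots $hcharpoly)
    rwa [roots_charpoly_diagonal, roots_charpoly_diagonal] at this
  obtain ⟨k, hk, hfix⟩ := Multiset.exists_iterate_eq_self_of_map_eq heigen
  have hdiag_pow : diagonal d ^ q ^ k = diagonal d := by
    rw [diagonal_pow]
    congr 1
    ext i
    simpa [pow_iterate] using hfix (d i) (Multiset.mem_map_of_mem d (Finset.mem_univ_val i))
  have hM_pow : M ^ q ^ k = M := by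
    have hconj : Q.val * M ^ q ^ k * Q⁻¹.val = Q.val * M * Q⁻¹.val := by
      rw [← Units.conj_pow, hQ, hdiag_pow]
    exact Q.isUnit.mul_left_cancel (Q⁻¹.isUnit.mul_right_cancel hconj)
  have horder : M ^ (q ^ k - 1) = 1 := hM.pow_sub_one_eq_one_of_pow_eq_self hM_pow
  have hcoprime : (orderOf M).Coprime q :=
    (Nat.coprime_pow_sub_one_self (by omega) hk.ne').coprime_dvd_left
      (orderOf_dvd_of_pow_eq_one horder)
  refine ⟨⟨k, hk, horder⟩, isOfFinOrder_iff_pow_eq_one.mpr ⟨q ^ k - 1, ?_, horder⟩, ?_⟩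
  · have := Nat.le_self_pow hk.ne' q
    omega
  · rintro p r - hr rfl
    exact hcoprime.coprime_dvd_right (dvd_pow_self p (by omega))

/-- Let `K` be an algebraically closed field, `q ≥ 2` a natural number, and
`M` an invertible `n×n` matrix over `K` that is diagonalizable (similar to a diagonal
matrix) and similar to `M ^ q`. Then there exists a natural number `k ≥ 1` such that
`M ^ (q ^ k - 1) = 1`; in particular `M` has finite order, and if `q` is a power of a
prime `p` this order is coprime to `p`. -/
theorem diagonalizable_selfsimilar_pow_has_finite_order
    {K : Type*} [Field K] [IsAlgClosed K] {n : ℕ} (q : ℕ) (hq : 2 ≤ q)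
    (M : Matrix (Fin n) (Fin n) K) (hM : IsUnit M)
    (hdiag : ∃ (Q : (Matrix (Fin n) (Fin n) K)ˣ) (d : Fin n → K),
      (Q : Matrix (Fin n) (Fin n) K) * M * ((Q⁻¹ : (Matrix (Fin n) (Fin n) K)ˣ) :
        Matrix (Fin n) (Fin n) K) = Matrix.diagonal d)
    (hsim : ∃ P : (Matrix (Fin n) (Fin n) K)ˣ,
      (P : Matrix (Fin n) (Fin n) K) * M * ((P⁻¹ : (Matrix (Fin n) (Fin n) K)ˣ) :
        Matrix (Fin n) (Fin n) K) = M ^ q) :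
    (∃ k : ℕ, 1 ≤ k ∧ M ^ (q ^ k - 1) = 1) ∧ IsOfFinOrder M ∧
      (∀ p r : ℕ, p.Prime → 1 ≤ r → q = p ^ r → Nat.Coprime (orderOf M) p) :=
  diagonalizable_selfsimilar_pow_has_finite_order_general q hq M hM hdiag hsim
end

section
/- Let K be a field of characteristic zero, n and q ≥ 1 natural numbers, and u an n×n matrix over K that is unipotent, i.e. u − 1 is nilpotent. Then u^q is similar to u, i.e. there exists an invertible n×n matrix P over K with P * u * P⁻¹ = u^q. -/
open Polynomial Submodule LinearMap

section Aux

variable {K : Type*} [Field K]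

private lemma aux_commute {A : Type*} [Ring A] [Algebra K A] (a : A) (f : K[X]) :
    Commute a (aeval a f) := by
  induction f using Polynomial.induction_on with
  | C c => rw [aeval_C]; exact ((Algebra.commutes c a).symm : Commute a (algebraMap K A c))
  | add p q hp hq => simpa [map_add] using hp.add_right hq
  | monomial n c ih =>
      simp only [map_mul, aeval_C, aeval_X_pow]
      have h1 : Commute a ((algebraMap K A) c) := ((Algebra.commutes c a).symm)
      exact h1.mul_right (Commute.pow_right (Commute.refl a) (n + 1))

private lemma aux_aeval_restrict {V : Type*} [AddCommGroup V] [Module K V]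
    (N : Module.End K V) (p : Submodule K V) (h : ∀ x ∈ p, N x ∈ p) (f : K[X]) (x : p) :
    ((aeval (N.restrict h) f) x : V) = aeval N f (x : V) := by
  induction f using Polynomial.induction_on with
  | C c => simp [Module.algebraMap_end_apply]
  | add p q hp hq => simp [map_add, hp, hq]
  | monomial n c ih =>
      simp only [map_mul, aeval_C, aeval_X_pow, Module.algebraMap_end_apply,
        LinearMap.smul_apply, Submodule.coe_smul, Module.End.mul_apply]
      congr 1
      rw [Module.End.pow_restrict]
      simp [LinearMap.restrict_coe_apply]

private lemma key {K : Type u} [Field K] (m : ℕ) :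
    ∀ (V : Type v) [AddCommGroup V] [Module K V] (N : Module.End K V),
      N ^ m = 0 → ∀ (f : K[X]), f.coeff 0 ≠ 0 →
      ∀ (U : Submodule K V), Disjoint U (LinearMap.ker (N ^ (m - 1))) →
      ∃ g : (Module.End K V)ˣ,
        (g : Module.End K V) * N = N * aeval N f * (g : Module.End K V) ∧
        ∀ x ∈ U, (g : Module.End K V) x = x := by
  induction m with
  | zero =>
      intro V _ _ N hN f hf U hU
      have h1 : (1 : Module.End K V) = 0 := by simpa using hN
      have hz : ∀ x : V, x = 0 := by
        intro x
        have : (1 : Module.End K V) x = (0 : Module.End K V) x := by rw [h1]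
        simpa using this
      refine ⟨1, ?_, fun x _ => rfl⟩
      ext x
      rw [hz x]
      simp
  | succ m ih =>
      intro V _ _ N hN f hf U hU
      -- the invariant subspace `ker N^m`
      set Vk : Submodule K V := LinearMap.ker (N ^ m) with hVk
      have hNmem : ∀ x : V, N x ∈ Vk := by
        intro x
        have h : (N ^ (m + 1)) x = 0 := by rw [hN]; rfl
        rw [hVk, LinearMap.mem_ker, ← Module.End.mul_apply, ← pow_succ]
        exact h
      have hNV : ∀ x ∈ Vk, N x ∈ Vk := fun x _ => hNmem x
      set N' : Module.End K Vk := N.restrict hNV with hN'def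
      have hNcoe : ∀ (k : ℕ) (x : Vk), ((N' ^ k) x : V) = (N ^ k) (x : V) := by
        intro k x
        rw [hN'def, Module.End.pow_restrict]
        simp [LinearMap.restrict_coe_apply]
      have hN' : N' ^ m = 0 := by
        ext x
        have := hNcoe m x
        have hx : (N ^ m) (x : V) = 0 := x.2
        simpa [hx] using this
      have hUVk : Disjoint U Vk := by simpa using hU
      -- choose a complement `C` of `Vk` containing `U`
      obtain ⟨D, hD⟩ := Submodule.exists_isCompl (Vk ⊔ U)
      have hC : IsCompl Vk (U ⊔ D) := by
        constructor
        · rw [disjoint_def]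
          intro x hxV hxUD
          obtain ⟨b, hb, d, hd, rfl⟩ := Submodule.mem_sup.mp hxUD
          have hdmem : d ∈ (Vk ⊔ U) ⊓ D := by
            refine ⟨?_, hd⟩
            have : d = (b + d) - b := by abel
            rw [this]
            exact Submodule.sub_mem _ (Submodule.mem_sup_left hxV)
              (Submodule.mem_sup_right hb)
          have hd0 : d = 0 := by
            have := hD.disjoint.le_bot hdmem
            simpa using this
          subst hd0
          have hb0 : b ∈ U ⊓ Vk := ⟨hb, by simpa using hxV⟩
          have := hUVk.symm.le_bot ⟨hb0.2, hb0.1⟩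
          simpa using this
        · rw [codisjoint_iff, ← sup_assoc]
          exact codisjoint_iff.mp hD.codisjoint
      set C : Submodule K V := U ⊔ D with hCdef
      have hUC : U ≤ C := le_sup_left
      set piV : V →ₗ[K] Vk := Submodule.linearProjOfIsCompl Vk C hC with hpiV
      set piC : V →ₗ[K] C := Submodule.linearProjOfIsCompl C Vk hC.symm with hpiC
      -- the subspace of `Vk` on which the recursively-obtained map must be the identity
      set U'' : Submodule K Vk := Submodule.comap Vk.subtype (Submodule.map N C) with hU''
      have hdis : Disjoint U'' (LinearMap.ker (N' ^ (m - 1))) := by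
        rw [disjoint_def]
        intro x hx1 hx2
        obtain ⟨c, hc, hcx⟩ := Submodule.mem_map.mp hx1
        rcases Nat.eq_zero_or_pos m with hm0 | hm0
        · subst hm0
          have hx0 : (N ^ 0) (x : V) = 0 := x.2
          rw [pow_zero, Module.End.one_apply] at hx0
          exact Subtype.ext (by rw [hx0]; rfl)
        · have hker : (N ^ (m - 1)) (x : V) = 0 := by
            have h1 : (N' ^ (m - 1)) x = 0 := hx2
            have := hNcoe (m - 1) x
            rw [h1] at this
            simpa using this.symm
          have hcker : c ∈ Vk := by
            simp only [hVk, LinearMap.mem_ker]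
            have : (N ^ (m - 1)) (N c) = 0 := by rw [hcx]; exact hker
            rw [← Module.End.mul_apply, ← pow_succ] at this
            rwa [Nat.sub_add_cancel hm0] at this
          have hc0 : c = 0 := by
            have := hC.disjoint.le_bot ⟨hcker, hc⟩
            simpa using this
          apply Subtype.ext
          have h0 : N c = (x : V) := hcx
          rw [hc0, map_zero] at h0
          simp [← h0]
      -- apply the inductive hypothesis on `Vk`
      obtain ⟨g', hg'rel, hg'id⟩ := ih Vk N' hN' f hf U'' hdis
      set w : Module.End K V := aeval N f with hw
      set w' : Module.End K Vk := aeval N' f with hw'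
      -- `w'` is a unit
      have hw'unit : IsUnit w' := by
        have hsplit : w' = algebraMap K (Module.End K Vk) (f.coeff 0)
            + N' * aeval N' f.divX := by
          rw [hw']
          conv_lhs => rw [← Polynomial.X_mul_divX_add f]
          rw [map_add, map_mul, aeval_X, aeval_C, add_comm]
        rw [hsplit]
        have hnil : IsNilpotent (N' * aeval N' f.divX) := by
          refine ⟨m, ?_⟩
          rw [(aux_commute N' f.divX).mul_pow, hN', zero_mul]
        have hcu : IsUnit (algebraMap K (Module.End K Vk) (f.coeff 0)) :=
          (isUnit_iff_ne_zero.mpr hf).map (algebraMap K _)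
        have hcomm : Commute (N' * aeval N' f.divX)
            (algebraMap K (Module.End K Vk) (f.coeff 0)) :=
          (Algebra.commutes (f.coeff 0) _).symm
        exact hnil.isUnit_add_left_of_commute hcu hcomm
      set W : (Module.End K Vk)ˣ := hw'unit.unit * g' with hW
      have hWcoe : (W : Module.End K Vk) = w' * (g' : Module.End K Vk) := by
        rw [hW]; simp
      -- the conjugating map and its inverse
      set gf : Module.End K V := C.subtype ∘ₗ piC
        + Vk.subtype ∘ₗ (W : Module.End K Vk) ∘ₗ piV with hgf
      set gi : Module.End K V := C.subtype ∘ₗ piC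
        + Vk.subtype ∘ₗ ((W⁻¹ : (Module.End K Vk)ˣ) : Module.End K Vk) ∘ₗ piV with hgi
      have happly : ∀ (A : Module.End K Vk) (x : V),
          (C.subtype ∘ₗ piC + Vk.subtype ∘ₗ A ∘ₗ piV) x
            = (piC x : V) + (A (piV x) : V) := by
        intro A x
        simp
      have hcomp : ∀ (A B : Module.End K Vk) (x : V),
          (C.subtype ∘ₗ piC + Vk.subtype ∘ₗ A ∘ₗ piV)
            ((C.subtype ∘ₗ piC + Vk.subtype ∘ₗ B ∘ₗ piV) x)
            = (piC x : V) + ((A * B) (piV x) : V) := by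
        intro A B x
        rw [happly, happly]
        congr 2
        · rw [map_add]
          have h1 : piC ((piC x : V)) = piC x :=
            Submodule.linearProjOfIsCompl_apply_left hC.symm _
          have h2 : piC ((B (piV x) : V)) = 0 :=
            Submodule.linearProjOfIsCompl_apply_right hC.symm _
          rw [h1, h2, add_zero]
        · rw [map_add]
          have h1 : piV ((piC x : V)) = 0 :=
            Submodule.linearProjOfIsCompl_apply_right hC _
          have h2 : piV ((B (piV x) : V)) = B (piV x) :=
            Submodule.linearProjOfIsCompl_apply_left hC _
          rw [h1, h2, zero_add, Module.End.mul_apply]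
      have hid : ∀ x : V, (piC x : V) + ((piV x : V)) = x := by
        intro x
        have := Submodule.projection_add_projection_eq_self hC x
        rw [add_comm] at this
        exact this
      have hmul1 : gf * gi = 1 := by
        ext x
        rw [Module.End.mul_apply, hgf, hgi, hcomp, Units.mul_inv]
        simpa using hid x
      have hmul2 : gi * gf = 1 := by
        ext x
        rw [Module.End.mul_apply, hgi, hgf, hcomp, Units.inv_mul]
        simpa using hid x
      refine ⟨⟨gf, gi, hmul1, hmul2⟩, ?_, ?_⟩
      · -- the conjugation relation
        have hwrel : ∀ y : Vk, w ((y : V)) = ((w' y : Vk) : V) :=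
          fun y => (aux_aeval_restrict N Vk hNV f y).symm
        have hNz : ∀ z : Vk, N ((z : V)) = ((N' z : Vk) : V) :=
          fun z => (LinearMap.restrict_coe_apply _ _ _).symm
        have hNwcomm : ∀ t : V, N (w t) = w (N t) := by
          intro t
          have := congrArg (fun (T : Module.End K V) => T t) (aux_commute N f).eq
          simpa [Module.End.mul_apply, hw] using this
        have hcomm' : ∀ t : Vk, N' (w' t) = w' (N' t) := by
          intro t
          have := congrArg (fun (T : Module.End K Vk) => T t) (aux_commute N' f).eq
          simpa [Module.End.mul_apply, hw'] using this
        have happV : ∀ y : Vk, gf ((y : V)) = (((W : Module.End K Vk) y : Vk) : V) := by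
          intro y
          rw [hgf, happly]
          have h1 : piC ((y : V)) = 0 :=
            Submodule.linearProjOfIsCompl_apply_right hC.symm _
          have h2 : piV ((y : V)) = y :=
            Submodule.linearProjOfIsCompl_apply_left hC _
          rw [h1, h2]
          simp
        have hrelV : ∀ b : Vk, gf (N (b : V)) = N (w (gf (b : V))) := by
          intro b
          rw [hNz b, happV (N' b), happV b, hWcoe]
          have hrec : (g' : Module.End K Vk) (N' b)
              = N' (w' ((g' : Module.End K Vk) b)) := by
            have := congrArg (fun (T : Module.End K Vk) => T b) hg'rel
            simpa [Module.End.mul_apply] using this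
          rw [Module.End.mul_apply, hrec, Module.End.mul_apply,
            hwrel (w' ((g' : Module.End K Vk) b)),
            hNz (w' (w' ((g' : Module.End K Vk) b)))]
          exact congrArg _ (hcomm' (w' ((g' : Module.End K Vk) b))).symm
        have hrelC : ∀ a : C, gf (N (a : V)) = N (w (gf (a : V))) := by
          intro a
          have hmem : N (a : V) ∈ Vk := hNmem _
          have hbU : (⟨N (a : V), hmem⟩ : Vk) ∈ U'' := by
            rw [hU'']
            exact Submodule.mem_comap.mpr (Submodule.mem_map.mpr ⟨(a : V), a.2, rfl⟩)
          have hgfa : gf ((a : V)) = (a : V) := by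
            rw [hgf, happly]
            have h1 : piC ((a : V)) = a :=
              Submodule.linearProjOfIsCompl_apply_left hC.symm _
            have h2 : piV ((a : V)) = 0 :=
              Submodule.linearProjOfIsCompl_apply_right hC _
            rw [h1, h2]
            simp
        -- LHS
          have hL : gf (N (a : V)) = w (N (a : V)) := by
            have h1 : N (a : V) = ((⟨N (a : V), hmem⟩ : Vk) : V) := rfl
            rw [h1, happV, hWcoe, Module.End.mul_apply,
              hg'id (⟨N (a : V), hmem⟩ : Vk) hbU, ← hwrel]
          rw [hL, hgfa, hNwcomm]
        -- combine
        show gf * N = N * w * gf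
        ext x
        have hx : ((piV x : V)) + ((piC x : V)) = x :=
          Submodule.projection_add_projection_eq_self hC x
        simp only [Module.End.mul_apply]
        calc gf (N x) = gf (N (((piV x : V)) + ((piC x : V)))) := by rw [hx]
          _ = gf (N ((piV x : V))) + gf (N ((piC x : V))) := by rw [map_add, map_add]
          _ = N (w (gf ((piV x : V)))) + N (w (gf ((piC x : V)))) := by
              rw [hrelV, hrelC]
          _ = N (w (gf (((piV x : V)) + ((piC x : V))))) := by
              rw [map_add gf, map_add w, map_add N]
          _ = N (w (gf x)) := by rw [hx]
      · intro x hx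
        show gf x = x
        rw [hgf, happly]
        have hxC : x ∈ C := hUC hx
        have h1 : piC x = ⟨x, hxC⟩ := by
          have := Submodule.linearProjOfIsCompl_apply_left hC.symm ⟨x, hxC⟩
          exact this
        have h2 : piV x = 0 := Submodule.projectionOnto_apply_of_mem_right hC hxC
        rw [h1, h2]
        simp

end Aux

/-- Let `K` be a field of characteristic zero, `n` and `q ≥ 1` natural
numbers, and `u` an `n×n` matrix over `K` that is unipotent, i.e. `u - 1` is nilpotent.
Then `u ^ q` is similar to `u`, i.e. there exists an invertible `n×n` matrix `P` over `K`
with `P * u * P⁻¹ = u ^ q`. -/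
theorem unipotent_similar_to_pow
    {K : Type*} [Field K] [CharZero K] {n : ℕ} (q : ℕ) (hq : 1 ≤ q)
    (u : Matrix (Fin n) (Fin n) K) (hu : IsNilpotent (u - 1)) :
    ∃ P : (Matrix (Fin n) (Fin n) K)ˣ,
      (P : Matrix (Fin n) (Fin n) K) * u * ((P⁻¹ : (Matrix (Fin n) (Fin n) K)ˣ) :
        Matrix (Fin n) (Fin n) K) = u ^ q := by
  classical
  obtain ⟨m, hm⟩ := hu
  set A := (Matrix.toLinAlgEquiv' :
    Matrix (Fin n) (Fin n) K ≃ₐ[K] Module.End K (Fin n → K)) with hA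
  set N : Module.End K (Fin n → K) := A u - 1 with hN
  have hNm : N ^ m = 0 := by
    have : N = A (u - 1) := by rw [map_sub, map_one]
    rw [this, ← map_pow, hm, map_zero]
  -- the polynomial `f` with `(1+X)^q = 1 + X * f` and `f.coeff 0 = q`
  have hdvd : (X : K[X]) ^ 2 ∣ ((1 + X) ^ q - 1 - C (q : K) * X) := by
    rw [Polynomial.X_pow_dvd_iff]
    intro d hd
    interval_cases d <;>
      simp [Polynomial.coeff_one_add_X_pow, Polynomial.coeff_one, Nat.choose_one_right]
  obtain ⟨p, hp⟩ := hdvd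
  set f : K[X] := C (q : K) + X * p with hf
  have hfc : f.coeff 0 ≠ 0 := by
    have hXp : (X * p).coeff 0 = 0 := by
      have : (X : K[X]) ∣ X * p := dvd_mul_right _ _
      exact (Polynomial.X_dvd_iff).mp this
    rw [hf, Polynomial.coeff_add, Polynomial.coeff_C, hXp]
    simpa using (by omega : q ≠ 0)
  have hfact : ((1 : K[X]) + X) ^ q = 1 + X * f := by
    rw [hf]
    linear_combination hp
  obtain ⟨g, hrel, -⟩ := key m (Fin n → K) N hNm f hfc ⊥ disjoint_bot_left
  set w : Module.End K (Fin n → K) := aeval N f with hw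
  have hAu : A u = 1 + N := by rw [hN]; abel
  have hupow : A (u ^ q) = 1 + N * w := by
    rw [map_pow, hAu]
    have h1 : (1 : Module.End K (Fin n → K)) + N = aeval N ((1 : K[X]) + X) := by
      rw [map_add, map_one, aeval_X]
    rw [h1, ← map_pow, hfact, map_add, map_one, map_mul, aeval_X, hw]
  have hgu : (g : Module.End K (Fin n → K)) * A u
      = A (u ^ q) * (g : Module.End K (Fin n → K)) := by
    rw [hAu, hupow, mul_add, mul_one, add_mul, one_mul, hrel]
  set G := A.symm (g : Module.End K (Fin n → K)) with hG
  set G' := A.symm ((g⁻¹ : (Module.End K (Fin n → K))ˣ) : Module.End K (Fin n → K)) with hG'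
  have hGG' : G * G' = 1 := by
    rw [hG, hG', ← map_mul, Units.mul_inv, map_one]
  have hG'G : G' * G = 1 := by
    rw [hG, hG', ← map_mul, Units.inv_mul, map_one]
  refine ⟨⟨G, G', hGG', hG'G⟩, ?_⟩
  have hGu : G * u = u ^ q * G := by
    have := congrArg A.symm hgu
    rw [map_mul, map_mul, AlgEquiv.symm_apply_apply, AlgEquiv.symm_apply_apply] at this
    exact this
  show G * u * G' = u ^ q
  rw [hGu, mul_assoc, hGG', mul_one]
end

section
/- Let p be a prime, q = p^r with r ≥ 1, K an algebraically closed field of characteristic zero, and g an invertible n×n matrix over K that is similar to g^q, i.e. there exists an invertible matrix h with h * g * h⁻¹ = g^q. Then g can be written as g = s * u = u * s, where u is unipotent (u − 1 is nilpotent) and s has finite order coprime to p; more precisely, there exists k ≥ 1 with s^(q^k − 1) = 1. -/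
open Polynomial Set

/-- Cancel iterates of an injective-on-set map. -/
lemma injOn_iterate_cancel {α : Type*} {F : α → α} {S : Set α}
    (hinj : Set.InjOn F S) (hmaps : Set.MapsTo F S S) :
    ∀ i {x y : α}, x ∈ S → y ∈ S → F^[i] x = F^[i] y → x = y := by
  intro i
  induction i with
  | zero => intro x y _ _ h; simpa using h
  | succ i ih =>
    intro x y hx hy h
    rw [Function.iterate_succ_apply, Function.iterate_succ_apply] at h
    exact hinj hx hy (ih (hmaps hx) (hmaps hy) h)

lemma iterate_pow_q {K : Type*} [Monoid K] (q : ℕ) :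
    ∀ (m : ℕ) (x : K), (fun x => x ^ q)^[m] x = x ^ (q ^ m) := by
  intro m
  induction m with
  | zero => intro x; simp
  | succ m ih =>
    intro x
    rw [Function.iterate_succ_apply, ih, ← pow_mul, pow_succ, mul_comm q (q ^ m)]

lemma isUnit_sub_nilpotent_iff {R : Type*} [Ring R] {x y : R}
    (hy : IsNilpotent y) (h : Commute x y) : IsUnit (x - y) ↔ IsUnit x := by
  constructor
  · intro h1
    have hc : Commute y (x - y) := (h.symm.sub_right (Commute.refl y))
    simpa using hy.isUnit_add_left_of_commute h1 hc
  · intro h1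
    have hc : Commute (-y) x := h.symm.neg_left
    simpa [sub_eq_add_neg] using hy.neg.isUnit_add_left_of_commute h1 hc

/-- Let `p` be a prime, `q = p ^ r` with `r ≥ 1`, `K` an algebraically
closed field of characteristic zero, and `g` an invertible `n×n` matrix over `K` that is
similar to `g ^ q`. Then `g` can be written as `g = s * u = u * s`, where `u` is
unipotent (`u - 1` is nilpotent) and `s` has finite order coprime to `p`; more
precisely, there exists `k ≥ 1` with `s ^ (q ^ k - 1) = 1`. -/
theorem selfsimilar_pow_jordan_decomposition
    (p r q : ℕ) (hp : p.Prime) (hr : 1 ≤ r) (hq : q = p ^ r)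
    {K : Type*} [Field K] [IsAlgClosed K] [CharZero K] {n : ℕ}
    (g : Matrix (Fin n) (Fin n) K) (hg : IsUnit g)
    (hsim : ∃ h : (Matrix (Fin n) (Fin n) K)ˣ,
      (h : Matrix (Fin n) (Fin n) K) * g * ((h⁻¹ : (Matrix (Fin n) (Fin n) K)ˣ) :
        Matrix (Fin n) (Fin n) K) = g ^ q) :
    ∃ s u : Matrix (Fin n) (Fin n) K, g = s * u ∧ s * u = u * s ∧
      IsNilpotent (u - 1) ∧ ∃ k : ℕ, 1 ≤ k ∧ s ^ (q ^ k - 1) = 1 := by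
  classical
  have hq2 : 2 ≤ q := by
    rw [hq]
    calc 2 ≤ p := hp.two_le
    _ = p ^ 1 := (pow_one p).symm
    _ ≤ p ^ r := Nat.pow_le_pow_right hp.pos hr
  -- trivial case n = 0
  rcases Nat.eq_zero_or_pos n with hn0 | hn
  · subst hn0
    have htriv : ∀ a b : Matrix (Fin 0) (Fin 0) K, a = b := by
      intro a b; ext i; exact i.elim0
    exact ⟨1, 1, htriv _ _, htriv _ _, by rw [htriv (1 - 1) 0]; exact ⟨1, by simp⟩,
      ⟨1, le_refl 1, htriv _ _⟩⟩
  haveI : Nonempty (Fin n) := ⟨⟨0, hn⟩⟩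
  -- the spectrum is mapped onto itself by the q-th power map
  set S : Set K := spectrum K g with hS
  have himg : (fun x => x ^ q) '' S = S := by
    obtain ⟨h, hh⟩ := hsim
    have h1 : spectrum K (g ^ q) = (fun x => x ^ q) '' S := by
      have hdeg : 0 < (X ^ q : K[X]).degree := by
        rw [degree_X_pow]
        exact_mod_cast by omega
      have := spectrum.map_polynomial_aeval_of_degree_pos g (X ^ q : K[X]) hdeg
      simpa using this
    rw [← h1, ← hh, spectrum.units_conjugate]
  -- the spectrum is finite
  let e : Matrix (Fin n) (Fin n) K ≃ₐ[K] Module.End K (Fin n → K) := Matrix.toLinAlgEquiv'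
  set f : Module.End K (Fin n → K) := e g with hf
  have hspec_ef : spectrum K f = S := AlgEquiv.spectrum_eq e g
  have hfin : S.Finite := by
    rw [← hspec_ef]
    have h1 : spectrum K f = {μ | f.HasEigenvalue μ} := by
      ext μ
      exact (Module.End.hasEigenvalue_iff_mem_spectrum).symm
    rw [h1]
    exact f.finite_hasEigenvalue
  -- injectivity of the power map on the spectrum
  have hmaps : Set.MapsTo (fun x => x ^ q) S S := fun x hx => himg ▸ ⟨x, hx, rfl⟩
  have hsurj : Set.SurjOn (fun x => x ^ q) S S := by
    rw [Set.SurjOn, himg]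
  have hinj : Set.InjOn (fun x => x ^ q) S :=
    ((hfin.surjOn_iff_bijOn_of_mapsTo hmaps).mp hsurj).injOn
  -- every eigenvalue satisfies λ ^ (q ^ m) = λ for some m ≥ 1
  have hex : ∀ μ ∈ S, ∃ m : ℕ, 1 ≤ m ∧ μ ^ (q ^ m) = μ := by
    intro μ hμ
    haveI : Finite S := hfin.to_subtype
    have hmem : ∀ i : ℕ, (fun x => x ^ q)^[i] μ ∈ S := fun i =>
      (hmaps.iterate i) hμ
    obtain ⟨i, j, hij, heq⟩ := Finite.exists_ne_map_eq_of_infinite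
      (fun i : ℕ => (⟨(fun x => x ^ q)^[i] μ, hmem i⟩ : S))
    have heq' : (fun x => x ^ q)^[i] μ = (fun x => x ^ q)^[j] μ :=
      congrArg Subtype.val heq
    rcases lt_or_gt_of_ne hij with hlt | hlt
    · refine ⟨j - i, by omega, ?_⟩
      have h2 : (fun x => x ^ q)^[i] ((fun x => x ^ q)^[j - i] μ)
          = (fun x => x ^ q)^[i] μ := by
        rw [← Function.iterate_add_apply, (by omega : i + (j - i) = j), heq']
      have := injOn_iterate_cancel hinj hmaps i
        ((hmaps.iterate (j - i)) hμ) hμ h2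
      rw [iterate_pow_q] at this
      exact this
    · refine ⟨i - j, by omega, ?_⟩
      have h2 : (fun x => x ^ q)^[j] ((fun x => x ^ q)^[i - j] μ)
          = (fun x => x ^ q)^[j] μ := by
        rw [← Function.iterate_add_apply, (by omega : j + (i - j) = i), heq'.symm]
      have := injOn_iterate_cancel hinj hmaps j
        ((hmaps.iterate (i - j)) hμ) hμ h2
      rw [iterate_pow_q] at this
      exact this
  -- choose a common exponent k
  set m : K → ℕ := fun μ => if h : μ ∈ S then (hex μ h).choose else 1 with hm
  set k : ℕ := ∏ μ ∈ hfin.toFinset, m μ with hk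
  have hm1 : ∀ μ, 1 ≤ m μ := by
    intro μ
    by_cases h : μ ∈ S
    · simp only [hm, dif_pos h]; exact (hex μ h).choose_spec.1
    · simp only [hm, dif_neg h]; exact le_refl 1
  have hk1 : 1 ≤ k := Finset.one_le_prod' (fun μ _ => hm1 μ)
  set N : ℕ := q ^ k - 1 with hN
  have hN1 : 1 ≤ N := by
    have : 2 ≤ q ^ k := le_trans hq2 (Nat.le_self_pow (by omega) q)
    omega
  -- every eigenvalue is an N-th root of unity
  have hrootN : ∀ μ ∈ S, μ ^ N = 1 := by
    intro μ hμ
    have hne : μ ≠ 0 := by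
      intro h0
      rw [h0] at hμ
      exact (spectrum.zero_mem_iff K).mp hμ hg
    have hμm : μ ^ (q ^ (m μ)) = μ := by
      simp only [hm, dif_pos hμ]
      exact (hex μ hμ).choose_spec.2
    have hμm1 : μ ^ (q ^ (m μ) - 1) = 1 := by
      have h3 : μ ^ (q ^ (m μ) - 1) * μ = 1 * μ := by
        rw [one_mul, ← pow_succ,
          (by have : 1 ≤ q ^ (m μ) := Nat.one_le_pow _ _ (by omega); omega :
            q ^ (m μ) - 1 + 1 = q ^ (m μ))]
        exact hμm
      exact mul_right_cancel₀ hne h3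
    have hdvd : (q ^ (m μ) - 1) ∣ N := by
      obtain ⟨t, ht⟩ : m μ ∣ k := Finset.dvd_prod_of_mem m (hfin.mem_toFinset.mpr hμ)
      have := Nat.sub_dvd_pow_sub_pow (q ^ (m μ)) 1 t
      rw [one_pow, ← pow_mul, ← ht] at this
      exact this
    obtain ⟨c, hc⟩ := hdvd
    rw [hN] at hc ⊢
    rw [hc, pow_mul, hμm1, one_pow]
  -- Jordan–Chevalley decomposition of the endomorphism
  obtain ⟨nn, hnn_mem, s_end, hs_mem, hnil, hss, hfeq⟩ :=
    Module.End.exists_isNilpotent_isSemisimple (f := f)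
  have hcomm_end : Commute s_end nn :=
    Algebra.commute_of_mem_adjoin_singleton_of_commute hnn_mem
      (Algebra.commute_of_mem_adjoin_self hs_mem).symm
  -- the spectra of f and s_end agree
  have hspec_s : spectrum K s_end = spectrum K f := by
    ext μ
    rw [spectrum.mem_iff, spectrum.mem_iff]
    have hrw : (algebraMap K _) μ - f = ((algebraMap K _) μ - s_end) - nn := by
      rw [hfeq]; abel
    have h1 : Commute ((algebraMap K (Module.End K (Fin n → K))) μ) nn :=
      Algebra.commutes μ nn
    rw [hrw, isUnit_sub_nilpotent_iff hnil (h1.sub_left hcomm_end)]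
  -- minimal polynomial of s_end divides X^N - 1
  have hsN : s_end ^ N = 1 := by
    set P := minpoly K s_end with hP
    have hPmonic : P.Monic := minpoly.monic (IsIntegral.of_finite K s_end)
    have hPsep : P.Separable :=
      PerfectField.separable_iff_squarefree.mpr hss.minpoly_squarefree
    have hPnodup : P.roots.Nodup := nodup_roots hPsep
    set Q : K[X] := X ^ N - C 1 with hQ
    have hQmonic : Q.Monic := monic_X_pow_sub_C (1 : K) (by omega)
    have hQ0 : Q ≠ 0 := hQmonic.ne_zero
    have hsub : P.roots ⊆ Q.roots := by
      intro μ hμ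
      have hroot : P.IsRoot μ := isRoot_of_mem_roots hμ
      have hev : μ ∈ spectrum K s_end :=
        (Module.End.hasEigenvalue_of_isRoot hroot).mem_spectrum
      rw [hspec_s, hspec_ef] at hev
      have hμN : μ ^ N = 1 := hrootN μ hev
      rw [mem_roots hQ0]
      simp [hQ, hμN]
    have hle : P.roots ≤ Q.roots := (Multiset.le_iff_subset hPnodup).mpr hsub
    have hdvd : P ∣ Q := by
      have h1 : P = (P.roots.map fun a => X - C a).prod :=
        (IsAlgClosed.splits P).eq_prod_roots_of_monic hPmonic
      have h2 : Q = (Q.roots.map fun a => X - C a).prod :=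
        (IsAlgClosed.splits Q).eq_prod_roots_of_monic hQmonic
      rw [h1, h2]
      exact Multiset.prod_dvd_prod_of_le (Multiset.map_le_map hle)
    obtain ⟨c, hc⟩ := hdvd
    have haev : aeval s_end Q = 0 := by
      rw [hc, map_mul, minpoly.aeval, zero_mul]
    rw [hQ] at haev
    simp only [map_sub, map_pow, aeval_X, aeval_C] at haev
    have : s_end ^ N = algebraMap K _ 1 := by
      rwa [sub_eq_zero] at haev
    simpa using this
  -- transfer back to matrices
  set Sm : Matrix (Fin n) (Fin n) K := e.symm s_end with hSm
  set Nm : Matrix (Fin n) (Fin n) K := e.symm nn with hNm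
  have hgSN : g = Nm + Sm := by
    have : e.symm f = g := by rw [hf, AlgEquiv.symm_apply_apply]
    rw [← this, hfeq, map_add]
  have hSpow : Sm ^ N = 1 := by
    rw [hSm, ← map_pow, hsN, map_one]
  have hcommSN : Commute Sm Nm := by
    have : e.symm (s_end * nn) = e.symm (nn * s_end) := by rw [hcomm_end.eq]
    rw [map_mul, map_mul] at this
    exact this
  have hNmnil : IsNilpotent Nm := hnil.map e.symm
  have hSg : Commute Sm g := by
    rw [hgSN]
    exact hcommSN.add_right (Commute.refl Sm)
  refine ⟨Sm, Sm ^ (N - 1) * g, ?_, ?_, ?_, k, hk1, hSpow⟩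
  · rw [← mul_assoc, ← pow_succ', (by omega : N - 1 + 1 = N), hSpow, one_mul]
  · exact ((Commute.refl Sm).pow_right (N - 1)).mul_right hSg
  · have hSS : Sm ^ (N - 1) * Sm = 1 := by
      rw [← pow_succ, (by omega : N - 1 + 1 = N), hSpow]
    have hu1 : Sm ^ (N - 1) * g - 1 = Sm ^ (N - 1) * Nm := by
      rw [hgSN, mul_add, hSS, add_sub_cancel_right]
    rw [hu1]
    exact (hcommSN.pow_left (N - 1)).isNilpotent_mul_left hNmnil
end
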